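/- arXiv:2206.15361 — 3 statements merged into one kernel-verified Lean document; each statement's English description precedes it below -/
import Mathlib

section
/- Let J be a finite type and let S₁, …, S_n (with n ≥ 1) be finitely many subsets of J. Let U = {x ∈ (0,+∞]^J : there exists k ∈ {1,…,n} such that x(j) ≠ +∞ for all j ∈ S_k}, an open subset of (0,+∞]^J. Then the inclusion map U ↪ (0,+∞]^J, with U carrying the subspace topology, is a contractible map. -/
/-- The half-open interval `(0, +∞]`, as a subspace of the extended non-negative reals. -/
abbrev OpenInfty : Type := {t : ENNReal // t ≠ 0}

/-- A continuous map `f : X → Y` is *contractible* if the topology on `Y` admits a basis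
all of whose members have contractible preimage under `f`. -/
def ContractibleMap {X Y : Type*} [TopologicalSpace X] [TopologicalSpace Y]
    (f : X → Y) : Prop :=
  Continuous f ∧ ∃ B : Set (Set Y), TopologicalSpace.IsTopologicalBasis B ∧
    ∀ V ∈ B, ContractibleSpace (f ⁻¹' V)

/-!
Inverting coordinates, `x ↦ (x⁻¹).toReal`, embeds `(0,+∞]^J` into `ℝ^J` as the closed orthant
`0 ≤ z`, sending `U` to the points of the orthant that, for some `k`, vanish at no `j ∈ S k`.
Preimages of sup-norm balls `ball c ε` centred in the orthant form a basis, and the image of `U`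
meets such a ball in a set star-shaped about `c + ε/2`: that point has all coordinates positive,
so the segment from it to a point of the image keeps every coordinate positive except at that
endpoint. Star-shaped sets are contractible.
-/

open scoped ENNReal
open Set Metric Topology TopologicalSpace

section Embedding

variable {Y F : Type*} [TopologicalSpace Y]

lemma Topology.IsInducing.isTopologicalBasis_preimage_ball [PseudoMetricSpace F] {e : Y → F}
    (he : IsInducing e) :
    IsTopologicalBasis {V | ∃ y, ∃ ε > 0, V = e ⁻¹' ball (e y) ε} := by
  refine isTopologicalBasis_of_isOpen_of_nhds ?_ fun y V hy hV => ?_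
  · rintro _ ⟨y, ε, -, rfl⟩
    exact isOpen_ball.preimage he.continuous
  · obtain ⟨W, hW, rfl⟩ := he.isOpen_iff.1 hV
    obtain ⟨ε, hε, hball⟩ := Metric.isOpen_iff.1 hW (e y) hy
    exact ⟨_, ⟨y, ε, hε, rfl⟩, mem_ball_self hε, preimage_mono hball⟩

lemma Topology.IsEmbedding.contractibleSpace_preimage_val_iff [TopologicalSpace F] {e : Y → F}
    (he : IsEmbedding e) (U : Set Y) (W : Set F) :
    ContractibleSpace (Subtype.val ⁻¹' (e ⁻¹' W) : Set U) ↔ ContractibleSpace ↥(e '' U ∩ W) := by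
  have heU : IsEmbedding (e ∘ Subtype.val : U → F) := he.comp .subtypeVal
  refine (heU.homeomorphImage _ |>.trans (.setCongr ?_)).contractibleSpace_iff
  rw [← preimage_comp, image_preimage_eq_inter_range, range_comp, Subtype.range_val, inter_comm]

theorem contractibleMap_subtypeVal_of_starConvex [SeminormedAddCommGroup F] [NormedSpace ℝ F]
    {e : Y → F} (he : IsEmbedding e) {U : Set Y}
    (h : ∀ y, ∀ ε > 0, ∃ p ∈ e '' U ∩ ball (e y) ε, StarConvex ℝ p (e '' U ∩ ball (e y) ε)) :
    ContractibleMap (Subtype.val : U → Y) := by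
  refine ⟨continuous_subtype_val, _, he.isInducing.isTopologicalBasis_preimage_ball, ?_⟩
  rintro _ ⟨y, ε, hε, rfl⟩
  obtain ⟨p, hp, hstar⟩ := h y ε hε
  exact (he.contractibleSpace_preimage_val_iff U _).2 (hstar.contractibleSpace ⟨p, hp⟩)

end Embedding

noncomputable def invToReal (x : OpenInfty) : ℝ := ((x : ℝ≥0∞)⁻¹).toReal

lemma isEmbedding_invToReal : IsEmbedding invToReal := by
  let ofRealInv (r : ℝ) : OpenInfty := ⟨(ENNReal.ofReal r)⁻¹, by simp⟩
  refine IsEmbedding.of_leftInverse (f := ofRealInv) (fun x => ?_) ?_ ?_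
  · ext
    change (ENNReal.ofReal ((x : ℝ≥0∞)⁻¹).toReal)⁻¹ = x
    rw [ENNReal.ofReal_toReal (ENNReal.inv_ne_top.2 x.2), inv_inv]
  · exact (continuous_inv.comp ENNReal.continuous_ofReal).subtype_mk _
  · exact ENNReal.continuousOn_toReal.comp_continuous
      (continuous_inv.comp continuous_subtype_val) fun x => ENNReal.inv_ne_top.2 x.2

lemma range_invToReal : range invToReal = Ici 0 := by
  refine Subset.antisymm (range_subset_iff.2 fun _ => ENNReal.toReal_nonneg) fun r hr => ?_
  exact ⟨⟨(ENNReal.ofReal r)⁻¹, by simp⟩, by simp [invToReal, ENNReal.toReal_ofReal hr]⟩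

lemma invToReal_eq_zero_iff (x : OpenInfty) : invToReal x = 0 ↔ (x : ℝ≥0∞) = ⊤ := by
  simp [invToReal, ENNReal.toReal_eq_zero_iff, x.2]

section Orthant

variable {J ι : Type*}

def nonvanishingOnSome (S : ι → Set J) : Set (J → ℝ) := {z | ∃ k, ∀ j ∈ S k, z j ≠ 0}

lemma isOpen_nonvanishingOnSome [Finite J] (S : ι → Set J) : IsOpen (nonvanishingOnSome S) := by
  rw [show nonvanishingOnSome S = ⋃ k, ⋂ j ∈ S k, {z | z j ≠ 0} by ext; simp [nonvanishingOnSome]]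
  exact isOpen_iUnion fun k => (toFinite (S k)).isOpen_biInter fun j _ =>
    isOpen_ne_fun (continuous_apply j) continuous_const

lemma starConvex_Ici_inter_nonvanishingOnSome {p : J → ℝ} (hp : ∀ j, 0 < p j) (S : ι → Set J) :
    StarConvex ℝ p (Ici 0 ∩ nonvanishingOnSome S) := by
  rintro z ⟨hz, k, hk⟩ a b ha hb hab
  refine ⟨convex_Ici (0 : J → ℝ) (show 0 ≤ p from fun j => (hp j).le) hz ha hb hab, k,
    fun j hj => ?_⟩
  simp only [Pi.add_apply, Pi.smul_apply, smul_eq_mul]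
  rcases ha.eq_or_lt with rfl | ha
  · obtain rfl : b = 1 := by simpa using hab
    simpa using hk j hj
  · exact (add_pos_of_pos_of_nonneg (mul_pos ha (hp j)) (mul_nonneg hb (hz j))).ne'

lemma exists_mem_starConvex_Ici_inter_nonvanishingOnSome_inter_ball [Fintype J] [Nonempty ι]
    (S : ι → Set J) {c : J → ℝ} (hc : 0 ≤ c) {ε : ℝ} (hε : 0 < ε) :
    ∃ p ∈ Ici 0 ∩ nonvanishingOnSome S ∩ ball c ε,
      StarConvex ℝ p (Ici 0 ∩ nonvanishingOnSome S ∩ ball c ε) := by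
  set p : J → ℝ := fun j => c j + ε / 2
  have hp : ∀ j, 0 < p j := fun j => add_pos_of_nonneg_of_pos (hc j) (half_pos hε)
  have hpball : p ∈ ball c ε := (dist_pi_lt_iff hε).2 fun j => by
    rw [Real.dist_eq, add_sub_cancel_left, abs_of_pos (half_pos hε)]
    exact half_lt_self hε
  have hpQ : p ∈ Ici 0 ∩ nonvanishingOnSome S :=
    ⟨fun j => (hp j).le, Classical.arbitrary ι, fun j _ => (hp j).ne'⟩
  exact ⟨p, ⟨hpQ, hpball⟩,
    (starConvex_Ici_inter_nonvanishingOnSome hp S).inter ((convex_ball c ε).starConvex hpball)⟩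

end Orthant

/-- Let `J` be a finite type and `S 1, …, S n` (with `n ≥ 1`) finitely many subsets of `J`.
Let `U` be the set of `x ∈ (0,+∞]^J` for which there is some `k` with `x j ≠ +∞` for all
`j ∈ S k`. Then `U` is open and the inclusion `U ↪ (0,+∞]^J` is a contractible map. -/
theorem stmt8 {J : Type*} [Finite J] {n : ℕ} (hn : 1 ≤ n) (S : Fin n → Set J) :
    IsOpen {x : J → OpenInfty | ∃ k : Fin n, ∀ j ∈ S k, (x j : ENNReal) ≠ ⊤} ∧
    ContractibleMap (Subtype.val :
      {x : J → OpenInfty | ∃ k : Fin n, ∀ j ∈ S k, (x j : ENNReal) ≠ ⊤} → (J → OpenInfty)) := by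
  cases nonempty_fintype J
  have : Nonempty (Fin n) := ⟨⟨0, hn⟩⟩
  set E : (J → OpenInfty) → (J → ℝ) := Pi.map fun _ => invToReal
  have hE : IsEmbedding E := .piMap fun _ => isEmbedding_invToReal
  have hU : {x : J → OpenInfty | ∃ k : Fin n, ∀ j ∈ S k, (x j : ENNReal) ≠ ⊤} =
      E ⁻¹' nonvanishingOnSome S := by
    ext x
    simp [E, nonvanishingOnSome, invToReal_eq_zero_iff]
  have hEU : E '' {x : J → OpenInfty | ∃ k : Fin n, ∀ j ∈ S k, (x j : ENNReal) ≠ ⊤} =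
      Ici 0 ∩ nonvanishingOnSome S := by
    rw [hU, image_preimage_eq_inter_range, range_piMap, range_invToReal, inter_comm]
    ext z
    simp [Pi.le_def]
  refine ⟨hU ▸ (isOpen_nonvanishingOnSome S).preimage hE.continuous,
    contractibleMap_subtypeVal_of_starConvex hE fun x ε hε => ?_⟩
  rw [hEU]
  exact exists_mem_starConvex_Ici_inter_nonvanishingOnSome_inter_ball S
    (fun j => ENNReal.toReal_nonneg) hε
end

section
/- Let J be a finite type with at least two elements and let j₀ ∈ J. Inside (0,+∞]^J consider the subsets A = {x : x(j₀) ≠ +∞ and x(j) = +∞ for at least one j ≠ j₀} and B = {x : x(j) = +∞ for at least one j ≠ j₀}. Then the inclusion map A ↪ B, with both sets carrying the subspace topology from (0,+∞]^J, is a contractible map. -/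
open Set TopologicalSpace Topology
open scoped ENNReal NNReal

namespace Stmt9Aux

noncomputable def θ (t : OpenInfty) : ℝ := ((t : ℝ≥0∞)⁻¹).toReal

lemma θ_nonneg (t : OpenInfty) : 0 ≤ θ t := ENNReal.toReal_nonneg

lemma θ_eq_zero_iff (t : OpenInfty) : θ t = 0 ↔ (t : ℝ≥0∞) = ⊤ := by
  simp [θ, ENNReal.toReal_eq_zero_iff, ENNReal.inv_eq_zero, ENNReal.inv_eq_top, t.prop]

noncomputable def ofRealInv (r : ℝ) : OpenInfty :=
  ⟨(ENNReal.ofReal r)⁻¹, by simp [ENNReal.inv_ne_zero]⟩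

lemma θ_ofRealInv {r : ℝ} (hr : 0 ≤ r) : θ (ofRealInv r) = r := by
  simp [θ, ofRealInv, ENNReal.toReal_ofReal hr]

lemma ofRealInv_eq_top_iff (r : ℝ) : ((ofRealInv r : OpenInfty) : ℝ≥0∞) = ⊤ ↔ r ≤ 0 := by
  simp [ofRealInv, ENNReal.inv_eq_top, ENNReal.ofReal_eq_zero]

/-- `(0,∞]` is homeomorphic to `[0,∞)` via `t ↦ (t⁻¹).toReal`. -/
noncomputable def oiHomeo : OpenInfty ≃ₜ {r : ℝ // 0 ≤ r} where
  toFun t := ⟨θ t, θ_nonneg t⟩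
  invFun r := ofRealInv r
  left_inv t := by
    apply Subtype.ext
    have h1 : ((t : ℝ≥0∞)⁻¹) ≠ ⊤ := ENNReal.inv_ne_top.mpr t.prop
    show (ENNReal.ofReal (((t : ℝ≥0∞)⁻¹).toReal))⁻¹ = (t : ℝ≥0∞)
    rw [ENNReal.ofReal_toReal h1, inv_inv]
  right_inv r := Subtype.ext (θ_ofRealInv r.prop)
  continuous_toFun := by
    apply Continuous.subtype_mk
    exact ENNReal.continuousOn_toReal.comp_continuous
      (continuous_inv.comp continuous_subtype_val)
      (fun t => ENNReal.inv_ne_top.mpr t.prop)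
  continuous_invFun := by
    apply Continuous.subtype_mk
    exact continuous_inv.comp (ENNReal.continuous_ofReal.comp continuous_subtype_val)

lemma isEmbedding_pival {J : Type*} :
    IsEmbedding (fun (x : J → {r : ℝ // 0 ≤ r}) j => (x j : ℝ)) := by
  refine ⟨⟨?_⟩, fun x y h => funext fun j => Subtype.ext (congrFun h j)⟩
  simp only [Pi.topologicalSpace, instTopologicalSpaceSubtype, induced_iInf, induced_compose]
  rfl

noncomputable def Θ {J : Type*} (x : J → OpenInfty) : J → ℝ := fun j => θ (x j)

lemma isEmbedding_Θ {J : Type*} : IsEmbedding (Θ (J := J)) := by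
  have h1 : (Θ (J := J)) = (fun (x : J → {r : ℝ // 0 ≤ r}) j => (x j : ℝ)) ∘
      (Homeomorph.piCongrRight fun _ : J => oiHomeo) := by
    funext x
    funext j
    rfl
  rw [h1]
  exact isEmbedding_pival.comp (Homeomorph.piCongrRight fun _ : J => oiHomeo).isEmbedding

/-- transport a subset along an embedding -/
noncomputable def embHomeoImage {X Z : Type*} [TopologicalSpace X] [TopologicalSpace Z]
    {g : X → Z} (hg : IsEmbedding g) (S : Set X) : S ≃ₜ (g '' S) :=
  (IsEmbedding.toHomeomorph (hg.comp IsEmbedding.subtypeVal)).trans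
    (Homeomorph.setCongr (by rw [Set.range_comp, Subtype.range_val]))

lemma mem_image_A_iff {J : Type*} (j₀ : J) (y : J → ℝ) :
    y ∈ Θ '' {x : J → OpenInfty | (x j₀ : ℝ≥0∞) ≠ ⊤ ∧ ∃ j, j ≠ j₀ ∧ (x j : ℝ≥0∞) = ⊤}
      ↔ (∀ j, 0 ≤ y j) ∧ y j₀ ≠ 0 ∧ ∃ j, j ≠ j₀ ∧ y j = 0 := by
  constructor
  · rintro ⟨x, ⟨hx0, j, hj, hjtop⟩, rfl⟩
    refine ⟨fun j => θ_nonneg (x j), ?_, j, hj, ?_⟩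
    · simpa [Θ, θ_eq_zero_iff] using hx0
    · simpa [Θ, θ_eq_zero_iff] using hjtop
  · rintro ⟨hnn, h0, j, hj, hj0⟩
    refine ⟨fun j => ofRealInv (y j), ⟨?_, j, hj, ?_⟩, funext fun j => θ_ofRealInv (hnn j)⟩
    · show ((ofRealInv (y j₀)) : ℝ≥0∞) ≠ ⊤
      simp only [ne_eq, ofRealInv_eq_top_iff]
      intro hle
      exact h0 (le_antisymm hle (hnn j₀))
    · show ((ofRealInv (y j)) : ℝ≥0∞) = ⊤
      rw [ofRealInv_eq_top_iff, hj0]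

end Stmt9Aux

open Stmt9Aux

/-- Let `J` be a finite type with at least two elements and `j₀ ∈ J`. Inside `(0,+∞]^J`
consider `A = {x : x j₀ ≠ +∞ and x j = +∞ for some j ≠ j₀}` and
`B = {x : x j = +∞ for some j ≠ j₀}`. Then the inclusion `A ↪ B` is a contractible map. -/
theorem stmt9 {J : Type*} [Finite J] (j₀ : J) (hJ : ∃ j : J, j ≠ j₀) :
    ContractibleMap (Set.inclusion
      (show {x : J → OpenInfty | (x j₀ : ENNReal) ≠ ⊤ ∧ ∃ j, j ≠ j₀ ∧ (x j : ENNReal) = ⊤} ⊆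
            {x : J → OpenInfty | ∃ j, j ≠ j₀ ∧ (x j : ENNReal) = ⊤}
        from fun x hx => hx.2)) := by
  classical
  set A : Set (J → OpenInfty) :=
    {x | (x j₀ : ENNReal) ≠ ⊤ ∧ ∃ j, j ≠ j₀ ∧ (x j : ENNReal) = ⊤} with hA
  set B : Set (J → OpenInfty) := {x | ∃ j, j ≠ j₀ ∧ (x j : ENNReal) = ⊤} with hBdef
  have hAB : A ⊆ B := fun x hx => hx.2
  refine ⟨continuous_inclusion hAB, ?_⟩
  -- the basis of ℝ^J by rational boxes
  have hbR := Real.isTopologicalBasis_Ioo_rat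
  have hbPi := isTopologicalBasis_pi (fun _ : J => hbR)
  -- the collection on ↥B
  set 𝒰 : Set (Set (J → ℝ)) := { S | ∃ (U : J → Set ℝ) (F : Finset J),
      (∀ i, i ∈ F → U i ∈ ⋃ (a : ℚ) (b : ℚ) (_ : a < b), {Set.Ioo (a : ℝ) (b : ℝ)}) ∧
      S = (F : Set J).pi U } with h𝒰
  have hconv : ∀ s ∈ ⋃ (a : ℚ) (b : ℚ) (_ : a < b), {Set.Ioo (a : ℝ) (b : ℝ)},
      Convex ℝ s := by
    intro s hs
    simp only [Set.mem_iUnion, Set.mem_singleton_iff] at hs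
    obtain ⟨a, b, -, rfl⟩ := hs
    exact convex_Ioo _ _
  set g : ↥B → (J → ℝ) := fun x => Θ x.val with hg
  have hgemb : IsEmbedding g := isEmbedding_Θ.comp IsEmbedding.subtypeVal
  refine ⟨{V : Set ↥B | (∃ U ∈ 𝒰, V = g ⁻¹' U) ∧ V.Nonempty}, ?_, ?_⟩
  · refine isTopologicalBasis_of_isOpen_of_nhds ?_ ?_
    · rintro V ⟨⟨U, hU, rfl⟩, -⟩
      exact (hbPi.isOpen hU).preimage hgemb.continuous
    · rintro x O hxO hO
      obtain ⟨W, hWopen, hWpre⟩ := hgemb.isInducing.isOpen_iff.mp hO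
      obtain ⟨U, hU, hxU, hUW⟩ := hbPi.exists_subset_of_mem_open
        (show g x ∈ W from by rw [← hWpre] at hxO; exact hxO) hWopen
      exact ⟨g ⁻¹' U, ⟨⟨U, hU, rfl⟩, ⟨x, hxU⟩⟩, hxU,
        hWpre ▸ Set.preimage_mono hUW⟩
  · rintro V ⟨⟨U, hU, rfl⟩, hVne⟩
    -- the inclusion map
    set f := (Set.inclusion (show A ⊆ B from hAB)) with hf
    set gA : ↥A → (J → ℝ) := fun x => Θ x.val with hgA
    have hgAemb : IsEmbedding gA := isEmbedding_Θ.comp IsEmbedding.subtypeVal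
    have hfpre : f ⁻¹' (g ⁻¹' U) = gA ⁻¹' U := rfl
    rw [hfpre]
    -- the image set
    have himg : gA '' (gA ⁻¹' U) = U ∩ (Θ '' A) := by
      rw [Set.image_preimage_eq_inter_range]
      congr 1
      rw [hgA]
      have : (fun x : ↥A => Θ x.val) = Θ ∘ Subtype.val := rfl
      rw [this, Set.range_comp, Subtype.range_val]
    have hhomeo : ↥(gA ⁻¹' U) ≃ₜ ↥(U ∩ Θ '' A) :=
      (embHomeoImage hgAemb _).trans (Homeomorph.setCongr himg)
    suffices hcs : ContractibleSpace ↥(U ∩ Θ '' A) from hhomeo.contractibleSpace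
    -- describe U as a box
    obtain ⟨u, F, huF, rfl⟩ := hU
    set W : J → Set ℝ := fun j => if j ∈ F then u j else Set.univ with hW
    have hWconv : ∀ j, Convex ℝ (W j) := by
      intro j
      by_cases hj : j ∈ F <;> simp only [hW, hj, if_pos, if_neg, if_true, if_false]
      · exact hconv _ (huF j hj)
      · exact convex_univ
    have hWopen : ∀ j, IsOpen (W j) := by
      intro j
      by_cases hj : j ∈ F <;> simp only [hW, hj, if_pos, if_neg, if_true, if_false]
      · exact hbR.isOpen (huF j hj)
      · exact isOpen_univ
    have hmemU : ∀ y : J → ℝ, y ∈ (F : Set J).pi u ↔ ∀ j, y j ∈ W j := by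
      intro y
      simp only [Set.mem_pi, Finset.mem_coe, hW]
      constructor
      · intro hy j
        by_cases hj : j ∈ F
        · rw [if_pos hj]; exact hy j hj
        · rw [if_neg hj]; trivial
      · intro hy j hj
        have h := hy j
        rwa [if_pos hj] at h
    -- obtain a point of U ∩ Θ '' B
    obtain ⟨b, hbU⟩ := hVne
    obtain ⟨j₁, hj₁, hj₁top⟩ := b.prop
    set y₀ : J → ℝ := g b with hy₀
    have hy₀U : ∀ j, y₀ j ∈ W j := (hmemU y₀).mp hbU
    have hy₀nn : ∀ j, 0 ≤ y₀ j := fun j => θ_nonneg _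
    have hy₀j₁ : y₀ j₁ = 0 := (θ_eq_zero_iff _).mpr hj₁top
    -- find a positive point of W j₀
    obtain ⟨ε, hε, hball⟩ := Metric.isOpen_iff.mp (hWopen j₀) _ (hy₀U j₀)
    set p : ℝ := y₀ j₀ + ε / 2 with hp
    have hppos : 0 < p := by have := hy₀nn j₀; simp only [hp]; linarith
    have hpW : p ∈ W j₀ := by
      apply hball
      simp only [Metric.mem_ball, hp, Real.dist_eq, add_sub_cancel_left, abs_of_pos
        (by positivity : (0:ℝ) < ε / 2)]
      linarith
    -- the star center
    set c : J → ℝ := fun j => if j = j₀ then p else if (0 : ℝ) ∈ W j then 0 else y₀ j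
      with hc
    have hcW : ∀ j, c j ∈ W j := by
      intro j
      simp only [hc]
      by_cases hj : j = j₀
      · rw [if_pos hj, hj]; exact hpW
      · rw [if_neg hj]
        by_cases h0 : (0 : ℝ) ∈ W j
        · rwa [if_pos h0]
        · rw [if_neg h0]; exact hy₀U j
    have hcnn : ∀ j, 0 ≤ c j := by
      intro j
      simp only [hc]
      by_cases hj : j = j₀
      · rw [if_pos hj]; exact hppos.le
      · rw [if_neg hj]
        by_cases h0 : (0 : ℝ) ∈ W j
        · rw [if_pos h0]
        · rw [if_neg h0]; exact hy₀nn j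
    have hcj₀ : c j₀ = p := by simp [hc]
    have hcj₁ : c j₁ = 0 := by
      simp only [hc]
      rw [if_neg hj₁, if_pos (hy₀j₁ ▸ hy₀U j₁)]
    have hcmem : c ∈ (F : Set J).pi u ∩ Θ '' A := by
      refine ⟨(hmemU c).mpr hcW, (mem_image_A_iff j₀ c).mpr ⟨hcnn, ?_, j₁, hj₁, hcj₁⟩⟩
      rw [hcj₀]; exact ne_of_gt hppos
    have hstar : StarConvex ℝ c ((F : Set J).pi u ∩ Θ '' A) := by
      intro y hy a b' ha hb' hab
      obtain ⟨hyU, hyA⟩ := hy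
      rw [mem_image_A_iff] at hyA
      obtain ⟨hynn, hyj₀, j₂, hj₂, hyj₂⟩ := hyA
      have hyW := (hmemU y).mp hyU
      constructor
      · refine (hmemU _).mpr fun j => ?_
        exact (hWconv j) (hcW j) (hyW j) ha hb' hab
      · rw [mem_image_A_iff]
        refine ⟨fun j => add_nonneg (mul_nonneg ha (hcnn j)) (mul_nonneg hb' (hynn j)),
          ?_, j₂, hj₂, ?_⟩
        · simp only [Pi.add_apply, Pi.smul_apply, smul_eq_mul]
          have hy₀pos : 0 < y j₀ := lt_of_le_of_ne (hynn j₀) (Ne.symm hyj₀)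
          rcases eq_or_lt_of_le ha with ha0 | hapos
          · have hb1 : b' = 1 := by linarith
            rw [← ha0, hb1]
            simpa [hcj₀] using ne_of_gt hy₀pos
          · have : 0 < a * c j₀ + b' * y j₀ := by
              have := mul_nonneg hb' (hynn j₀)
              have h1 : 0 < a * c j₀ := mul_pos hapos (hcj₀ ▸ hppos)
              linarith
            exact ne_of_gt this
        · have h0W : (0 : ℝ) ∈ W j₂ := hyj₂ ▸ hyW j₂
          have hcj₂ : c j₂ = 0 := by simp only [hc]; rw [if_neg hj₂, if_pos h0W]
          simp [hcj₂, hyj₂]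
    exact hstar.contractibleSpace ⟨c, hcmem⟩
end

section
/- Let q : Z′ → Z be a surjective covering map of topological spaces, let p : X → Z be a continuous map such that for every z ∈ Z the fibre p⁻¹(z) is a preconnected subspace of X, and let p′ : X → Z′ be a continuous surjective map with q ∘ p′ = p. Then q is injective, and hence a homeomorphism. -/
/-- Let `q : Z' → Z` be a surjective covering map, `p : X → Z` a continuous map all of
whose fibres are preconnected, and `p' : X → Z'` a continuous surjection with
`q ∘ p' = p`. Then `q` is injective, and hence a homeomorphism. -/
theorem stmt13 {X Z' Z : Type*} [TopologicalSpace X] [TopologicalSpace Z']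
    [TopologicalSpace Z]
    (q : Z' → Z) (hq : IsCoveringMap q) (hqsurj : Function.Surjective q)
    (p : X → Z) (hp : Continuous p)
    (hfib : ∀ z : Z, IsPreconnected (p ⁻¹' {z}))
    (p' : X → Z') (hp' : Continuous p') (hp'surj : Function.Surjective p')
    (hcomp : q ∘ p' = p) :
    Function.Injective q ∧ ∃ e : Z' ≃ₜ Z, ⇑e = q := by
  have hinj : Function.Injective q := by
    intro a b hab
    obtain ⟨x, hx⟩ := hp'surj a
    obtain ⟨y, hy⟩ := hp'surj b
    set z := q a with hz
    have hdisc : DiscreteTopology (q ⁻¹' {z}) := (hq z).1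
    have hxz : x ∈ p ⁻¹' {z} := by
      simp [← hcomp, hx, hz]
    have hyz : y ∈ p ⁻¹' {z} := by
      simp [← hcomp, hy, ← hab]
    have hmap : Set.MapsTo p' (p ⁻¹' {z}) (q ⁻¹' {z}) := by
      intro u hu
      have : p u = z := hu
      simpa [Set.mem_preimage, ← hcomp] using this
    have := (hfib z).constant_of_mapsTo (f := p') (isDiscrete_iff_discreteTopology.mpr hdisc) hp'.continuousOn hmap hxz hyz
    rw [hx, hy] at this
    exact this
  refine ⟨hinj, ⟨Equiv.toHomeomorphOfContinuousOpen
    (Equiv.ofBijective q ⟨hinj, hqsurj⟩) hq.continuous hq.isOpenMap, rfl⟩⟩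
end
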